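/- The conditional variance of the standardized outcome given selection equals 1 − ρ² λ(μ₂)(μ₂ + λ(μ₂)), where λ(x) = φ(x)/Φ(x) is the inverse Mills ratio; that is, ∫ z(y)² f(y) dy − (∫ z(y) f(y) dy)² = 1 − ρ² λ(μ₂)(μ₂ + λ(μ₂)), with f(y) = (1/(σ Φ(μ₂))) φ(z(y)) Φ(ζ(y)). -/

import Mathlib

/-!
Substituting `t = z y` turns the two integrals into `∫ tᵏ φ(t) Φ(a + b t) dt / Φ(μ₂)` for
`k = 1, 2`, with `s = √(1 - ρ²)`, `a = μ₂ / s`, `b = ρ / s`, and `q = √(1 + b²) = 1 / s`.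
Gaussian integration by parts (`∫ t φ g = ∫ φ g'`) reduces these moments to
`∫ φ(t) Φ(a + b t) dt` and to `∫ tʲ φ(t) φ(a + b t) dt`. The latter are explicit after
completing the square, and the former equals `Φ(a / q)`: as functions of `a`, both have
derivative `φ(a / q) / q` and both vanish at `-∞`.
-/

open MeasureTheory Set

/-- Standard normal density. -/
noncomputable def phi (t : ℝ) : ℝ := Real.exp (-(t ^ 2) / 2) / Real.sqrt (2 * Real.pi)

/-- Standard normal cumulative distribution function. -/
noncomputable def Phi (x : ℝ) : ℝ := ∫ t in Set.Iic x, phi t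

open Filter Topology ProbabilityTheory

lemma phi_eq_gaussianPDFReal : phi = gaussianPDFReal 0 1 := by
  funext t
  simp [phi, gaussianPDFReal, div_eq_mul_inv, mul_comm]

lemma phi_pos (t : ℝ) : 0 < phi t := by
  unfold phi; positivity

lemma phi_nonneg (t : ℝ) : 0 ≤ phi t := (phi_pos t).le

lemma phi_le_phi_zero (t : ℝ) : phi t ≤ phi 0 := by
  unfold phi
  exact div_le_div_of_nonneg_right (Real.exp_le_exp.2 (by nlinarith [sq_nonneg t]))
    (Real.sqrt_nonneg _)

lemma continuous_phi : Continuous phi := by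
  unfold phi; fun_prop

lemma hasDerivAt_phi (t : ℝ) : HasDerivAt phi (-t * phi t) t := by
  have h : HasDerivAt (fun t : ℝ => -(t ^ 2) / 2) (-t) t := by
    simpa using ((hasDerivAt_pow 2 t).neg.div_const 2).congr_deriv (by push_cast; ring)
  rw [show -t * phi t = Real.exp (-(t ^ 2) / 2) * -t / Real.sqrt (2 * Real.pi) by
    unfold phi; ring]
  exact h.exp.div_const _

lemma integrable_phi : Integrable phi := by
  rw [phi_eq_gaussianPDFReal]; exact integrable_gaussianPDFReal 0 1

lemma integral_phi : ∫ t, phi t = 1 := by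
  rw [phi_eq_gaussianPDFReal]; exact integral_gaussianPDFReal_eq_one 0 one_ne_zero

lemma integrable_pow_mul_phi (n : ℕ) : Integrable fun t : ℝ => t ^ n * phi t := by
  have h := (integrable_rpow_mul_exp_neg_mul_sq (b := 1 / 2) one_half_pos
    (s := n) (by linarith [n.cast_nonneg (α := ℝ)])).div_const (Real.sqrt (2 * Real.pi))
  refine h.congr (ae_of_all _ fun t => ?_)
  simp only [Real.rpow_natCast, phi]
  ring_nf

lemma integrable_mul_phi : Integrable fun t : ℝ => t * phi t := by
  simpa using integrable_pow_mul_phi 1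

lemma integral_mul_phi : ∫ t, t * phi t = 0 := by
  have h := integral_id_gaussianReal (μ := 0) (v := 1)
  rw [integral_gaussianReal_eq_integral_smul one_ne_zero, ← phi_eq_gaussianPDFReal] at h
  simpa only [smul_eq_mul, mul_comm] using h

lemma Phi_eq_cdf (x : ℝ) : Phi x = cdf (gaussianReal 0 1) x := by
  rw [cdf_eq_real, measureReal_def, gaussianReal_apply_eq_integral _ one_ne_zero,
    ENNReal.toReal_ofReal (setIntegral_nonneg measurableSet_Iic fun t _ =>
      gaussianPDFReal_nonneg 0 1 t), Phi, phi_eq_gaussianPDFReal]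

lemma abs_Phi_le_one (x : ℝ) : |Phi x| ≤ 1 := by
  rw [Phi_eq_cdf, abs_of_nonneg (cdf_nonneg _ x)]
  exact cdf_le_one _ x

lemma tendsto_Phi_atBot : Tendsto Phi atBot (𝓝 0) := by
  simpa only [funext Phi_eq_cdf] using tendsto_cdf_atBot _

lemma Phi_pos (x : ℝ) : 0 < Phi x := by
  rw [Phi, setIntegral_pos_iff_support_of_nonneg_ae (ae_of_all _ phi_nonneg)
    integrable_phi.integrableOn, Function.support_eq_univ fun t => (phi_pos t).ne',
    univ_inter, Real.volume_Iic]
  exact ENNReal.zero_lt_top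

lemma hasDerivAt_Phi (x : ℝ) : HasDerivAt Phi (phi x) x := by
  have hPhi : Phi = fun u => Phi 0 + ∫ t in (0 : ℝ)..u, phi t := by
    funext u
    rw [← intervalIntegral.integral_Iic_sub_Iic integrable_phi.integrableOn
      integrable_phi.integrableOn, Phi, Phi]
    ring
  rw [hPhi]
  exact (intervalIntegral.integral_hasDerivAt_right integrable_phi.intervalIntegrable
    continuous_phi.stronglyMeasurable.stronglyMeasurableAtFilter
    continuous_phi.continuousAt).const_add _

lemma continuous_Phi : Continuous Phi :=
  continuous_iff_continuousAt.2 fun x => (hasDerivAt_Phi x).continuousAt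

lemma integral_comp_mul_add {q : ℝ} (hq : 0 < q) (f : ℝ → ℝ) (c : ℝ) :
    ∫ t, f (q * t + c) = q⁻¹ * ∫ t, f t := by
  rw [Measure.integral_comp_mul_left (fun u => f (u + c)), integral_add_right_eq_self,
    abs_of_pos (inv_pos.2 hq), smul_eq_mul]

lemma integral_comp_sub_div {σ : ℝ} (hσ : 0 < σ) (f : ℝ → ℝ) (c : ℝ) :
    ∫ y, f ((y - c) / σ) = σ * ∫ t, f t := by
  have h := integral_comp_mul_add (inv_pos.2 hσ) f (-c / σ)
  rw [inv_inv] at h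
  rw [← h]
  congr 1; funext y; congr 1; ring

lemma integral_phi_comp_mul_add {q : ℝ} (hq : 0 < q) (c : ℝ) :
    ∫ t, phi (q * t + c) = q⁻¹ := by
  rw [integral_comp_mul_add hq phi, integral_phi, mul_one]

lemma integral_mul_phi_comp_mul_add {q : ℝ} (hq : 0 < q) (c : ℝ) :
    ∫ t, t * phi (q * t + c) = -c / q ^ 2 := by
  have h : ∀ t, t * phi (q * t + c) = ((q * t + c - c) / q) * phi (q * t + c) := fun t => by
    field_simp; ring
  simp_rw [h]
  rw [integral_comp_mul_add hq (fun u => (u - c) / q * phi u)]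
  have hsplit : ∀ u, (u - c) / q * phi u = q⁻¹ * (u * phi u) - c / q * phi u := fun u => by
    ring
  simp_rw [hsplit]
  rw [integral_sub (integrable_mul_phi.const_mul _) (integrable_phi.const_mul _),
    integral_const_mul, integral_const_mul, integral_mul_phi, integral_phi]
  field_simp
  ring

lemma MeasureTheory.Integrable.mul_phi_affine {f : ℝ → ℝ} (hf : Integrable f) (a b : ℝ) :
    Integrable fun t => f t * phi (a + b * t) :=
  hf.mul_bdd (continuous_phi.comp (by fun_prop)).aestronglyMeasurable
    (ae_of_all _ fun t => by
      rw [Real.norm_eq_abs, abs_of_nonneg (phi_nonneg _)]; exact phi_le_phi_zero _)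

lemma MeasureTheory.Integrable.mul_Phi_affine {f : ℝ → ℝ} (hf : Integrable f) (a b : ℝ) :
    Integrable fun t => f t * Phi (a + b * t) :=
  hf.mul_bdd (continuous_Phi.comp (by fun_prop)).aestronglyMeasurable
    (ae_of_all _ fun t => abs_Phi_le_one _)

lemma hasDerivAt_Phi_affine (a b t : ℝ) :
    HasDerivAt (fun t => Phi (a + b * t)) (b * phi (a + b * t)) t := by
  have h : HasDerivAt (fun t => a + b * t) b t := by
    simpa using ((hasDerivAt_id t).const_mul b).const_add a
  rw [mul_comm]
  exact (hasDerivAt_Phi (a + b * t)).comp t h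

-- Gaussian integration by parts (Stein's identity), using `phi' t = -t * phi t`.
lemma integral_mul_phi_mul_eq_integral_phi_mul_deriv {g g' : ℝ → ℝ}
    (hg : ∀ t, HasDerivAt g (g' t) t) (hg_int : Integrable fun t => phi t * g t)
    (hg'_int : Integrable fun t => phi t * g' t)
    (hxg_int : Integrable fun t => t * phi t * g t) :
    ∫ t, t * phi t * g t = ∫ t, phi t * g' t := by
  have hxg_int' : Integrable fun t => -t * phi t * g t := by
    simpa only [neg_mul] using hxg_int.fun_neg
  rw [integral_mul_deriv_eq_deriv_mul_of_integrable (fun t _ => hasDerivAt_phi t)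
    (fun t _ => hg t) hg'_int hxg_int' hg_int, ← integral_neg]
  simp only [neg_mul, neg_neg]

lemma eq_of_hasDerivAt_of_tendsto_atBot {f g f' : ℝ → ℝ} {l : ℝ}
    (hf : ∀ x, HasDerivAt f (f' x) x) (hg : ∀ x, HasDerivAt g (f' x) x)
    (hfl : Tendsto f atBot (𝓝 l)) (hgl : Tendsto g atBot (𝓝 l)) : f = g := by
  have hconst : ∀ x y, f x - g x = f y - g y :=
    is_const_of_deriv_eq_zero (fun x => ((hf x).sub (hg x)).differentiableAt)
      fun x => ((hf x).sub (hg x)).deriv.trans (sub_self _)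
  have hlim : Tendsto (fun x => f x - g x) atBot (𝓝 0) := by simpa using hfl.sub hgl
  funext x
  have hx : f x - g x = 0 :=
    tendsto_nhds_unique tendsto_const_nhds (hlim.congr fun y => hconst y x)
  simpa [sub_eq_zero] using hx

lemma hasDerivAt_integral_phi_mul_Phi_affine (b x : ℝ) :
    HasDerivAt (fun x => ∫ t, phi t * Phi (x + b * t)) (∫ t, phi t * phi (x + b * t)) x := by
  refine (hasDerivAt_integral_of_dominated_loc_of_deriv_le (x₀ := x)
    (F := fun x t => phi t * Phi (x + b * t)) (F' := fun x t => phi t * phi (x + b * t))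
    (bound := fun t => phi 0 * phi t) univ_mem
    (Eventually.of_forall fun x => (integrable_phi.mul_Phi_affine x b).aestronglyMeasurable)
    (integrable_phi.mul_Phi_affine x b) (integrable_phi.mul_phi_affine x b).aestronglyMeasurable
    (ae_of_all _ fun t y _ => ?_) (integrable_phi.const_mul _)
    (ae_of_all _ fun t y _ => ?_)).2
  · rw [Real.norm_eq_abs, abs_of_nonneg (mul_nonneg (phi_nonneg _) (phi_nonneg _)), mul_comm]
    exact mul_le_mul_of_nonneg_right (phi_le_phi_zero _) (phi_nonneg _)
  · have h := (hasDerivAt_Phi_affine (b * t) 1 y).const_mul (phi t)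
    simpa only [one_mul, add_comm (b * t)] using h

lemma tendsto_integral_phi_mul_Phi_affine_atBot (b : ℝ) :
    Tendsto (fun x => ∫ t, phi t * Phi (x + b * t)) atBot (𝓝 0) := by
  have h := tendsto_integral_filter_of_dominated_convergence (l := atBot)
    (F := fun x t => phi t * Phi (x + b * t)) (f := fun _ => 0) phi
    (Eventually.of_forall fun x => (integrable_phi.mul_Phi_affine x b).aestronglyMeasurable)
    (Eventually.of_forall fun x => ae_of_all _ fun t => ?_) integrable_phi
    (ae_of_all _ fun t => ?_)
  · simpa using h
  · rw [norm_mul, Real.norm_eq_abs, abs_of_nonneg (phi_nonneg t)]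
    exact mul_le_of_le_one_right (phi_nonneg t) (abs_Phi_le_one _)
  · have h := tendsto_Phi_atBot.comp (tendsto_atBot_add_const_right _ (b * t) tendsto_id)
    simpa using h.const_mul (phi t)

section

variable {b q : ℝ}

-- Completing the square: `t ^ 2 + (a + b t) ^ 2 = (a / q) ^ 2 + (q t + b a / q) ^ 2`.
lemma phi_mul_phi_affine (hq : 0 < q) (hqb : q ^ 2 = 1 + b ^ 2) (a t : ℝ) :
    phi t * phi (a + b * t) = phi (a / q) * phi (q * t + b * (a / q)) := by
  unfold phi
  rw [div_mul_div_comm, div_mul_div_comm, ← Real.exp_add, ← Real.exp_add]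
  congr 2
  field_simp
  linear_combination (t ^ 2 * q ^ 2 - a ^ 2) * hqb

lemma integral_phi_mul_phi_affine (hq : 0 < q) (hqb : q ^ 2 = 1 + b ^ 2) (a : ℝ) :
    ∫ t, phi t * phi (a + b * t) = phi (a / q) / q := by
  simp_rw [phi_mul_phi_affine hq hqb a]
  rw [integral_const_mul, integral_phi_comp_mul_add hq]
  exact (div_eq_mul_inv _ _).symm

lemma integral_mul_phi_mul_phi_affine (hq : 0 < q) (hqb : q ^ 2 = 1 + b ^ 2) (a : ℝ) :
    ∫ t, t * (phi t * phi (a + b * t)) = -(b * (a / q)) / q ^ 2 * phi (a / q) := by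
  simp_rw [phi_mul_phi_affine hq hqb a, mul_left_comm _ (phi (a / q))]
  rw [integral_const_mul, integral_mul_phi_comp_mul_add hq, mul_comm]

lemma integral_phi_mul_Phi_affine (hq : 0 < q) (hqb : q ^ 2 = 1 + b ^ 2) (a : ℝ) :
    ∫ t, phi t * Phi (a + b * t) = Phi (a / q) := by
  have hPhi : ∀ x, HasDerivAt (fun x => Phi (x / q)) (phi (x / q) / q) x := fun x => by
    simpa [div_eq_mul_inv, mul_comm] using hasDerivAt_Phi_affine 0 q⁻¹ x
  have hG : ∀ x, HasDerivAt (fun x => ∫ t, phi t * Phi (x + b * t)) (phi (x / q) / q) x :=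
    fun x => integral_phi_mul_phi_affine hq hqb x ▸ hasDerivAt_integral_phi_mul_Phi_affine b x
  have h := eq_of_hasDerivAt_of_tendsto_atBot hG hPhi
    (tendsto_integral_phi_mul_Phi_affine_atBot b)
    (tendsto_Phi_atBot.comp (tendsto_id.atBot_div_const hq))
  exact congrFun h a

lemma integral_mul_phi_mul_Phi_affine (hq : 0 < q) (hqb : q ^ 2 = 1 + b ^ 2) (a : ℝ) :
    ∫ t, t * phi t * Phi (a + b * t) = b / q * phi (a / q) := by
  rw [integral_mul_phi_mul_eq_integral_phi_mul_deriv (hasDerivAt_Phi_affine a b)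
    (integrable_phi.mul_Phi_affine a b)
    (((integrable_phi.mul_phi_affine a b).const_mul b).congr (ae_of_all _ fun t => by ring))
    (integrable_mul_phi.mul_Phi_affine a b)]
  simp_rw [mul_left_comm (phi _) b]
  rw [integral_const_mul, integral_phi_mul_phi_affine hq hqb]
  ring

lemma integral_sq_mul_phi_mul_Phi_affine (hq : 0 < q) (hqb : q ^ 2 = 1 + b ^ 2) (a : ℝ) :
    ∫ t, t ^ 2 * phi t * Phi (a + b * t) = Phi (a / q) - (b / q) ^ 2 * (a / q) * phi (a / q) := by
  have hg : ∀ t, HasDerivAt (fun t => t * Phi (a + b * t))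
      (Phi (a + b * t) + t * (b * phi (a + b * t))) t := fun t => by
    simpa using (hasDerivAt_id' t).fun_mul (hasDerivAt_Phi_affine a b t)
  have hint_xphi : Integrable fun t => t * (phi t * phi (a + b * t)) :=
    (integrable_mul_phi.mul_phi_affine a b).congr (ae_of_all _ fun t => by ring)
  have hstein := integral_mul_phi_mul_eq_integral_phi_mul_deriv hg
    ((integrable_mul_phi.mul_Phi_affine a b).congr (ae_of_all _ fun t => by ring))
    (((integrable_phi.mul_Phi_affine a b).add (hint_xphi.const_mul b)).congr
      (ae_of_all _ fun t => by simp only [Pi.add_apply]; ring))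
    (((integrable_pow_mul_phi 2).mul_Phi_affine a b).congr (ae_of_all _ fun t => by ring))
  calc ∫ t, t ^ 2 * phi t * Phi (a + b * t)
      = ∫ t, (phi t * Phi (a + b * t) + b * (t * (phi t * phi (a + b * t)))) := by
        convert hstein using 3 <;> ring
    _ = Phi (a / q) - (b / q) ^ 2 * (a / q) * phi (a / q) := by
        rw [integral_add (integrable_phi.mul_Phi_affine a b) (hint_xphi.const_mul b),
          integral_const_mul, integral_phi_mul_Phi_affine hq hqb,
          integral_mul_phi_mul_phi_affine hq hqb]
        ring

end

theorem GH_conditional_variance (μ₁ μ₂ σ ρ : ℝ) (hσ : 0 < σ) (hρ₁ : -1 < ρ) (hρ₂ : ρ < 1)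
    (z ζ : ℝ → ℝ)
    (hz : ∀ y, z y = (y - μ₁) / σ)
    (hζ : ∀ y, ζ y = (μ₂ + ρ * z y) / Real.sqrt (1 - ρ ^ 2)) :
    (∫ y : ℝ, z y ^ 2 * ((1 / (σ * Phi μ₂)) * phi (z y) * Phi (ζ y)))
      - (∫ y : ℝ, z y * ((1 / (σ * Phi μ₂)) * phi (z y) * Phi (ζ y))) ^ 2
      = 1 - ρ ^ 2 * (phi μ₂ / Phi μ₂) * (μ₂ + phi μ₂ / Phi μ₂) := by
  have hρ_sq : 0 < 1 - ρ ^ 2 := by nlinarith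
  set s := Real.sqrt (1 - ρ ^ 2) with hs_def
  have hs : 0 < s := Real.sqrt_pos.2 hρ_sq
  have hq : 0 < 1 / s := one_div_pos.2 hs
  have hqb : (1 / s) ^ 2 = 1 + (ρ / s) ^ 2 := by
    rw [div_pow, div_pow, hs_def, Real.sq_sqrt hρ_sq.le]
    field_simp
    ring
  have hPhi := (Phi_pos μ₂).ne'
  have hmoment : ∀ n : ℕ, ∫ y, z y ^ n * ((1 / (σ * Phi μ₂)) * phi (z y) * Phi (ζ y))
      = (∫ t, t ^ n * phi t * Phi (μ₂ / s + ρ / s * t)) / Phi μ₂ := fun n => by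
    simp_rw [hζ, hz]
    rw [integral_comp_sub_div hσ (fun t => t ^ n * ((1 / (σ * Phi μ₂)) * phi t *
      Phi ((μ₂ + ρ * t) / s))), ← integral_const_mul, ← integral_div]
    congr 1; funext t
    rw [add_div, mul_div_right_comm]
    field_simp
  have hμ : μ₂ / s / (1 / s) = μ₂ := by field_simp
  have hρ : ρ / s / (1 / s) = ρ := by field_simp
  have h1 := integral_mul_phi_mul_Phi_affine hq hqb (μ₂ / s)
  have h2 := integral_sq_mul_phi_mul_Phi_affine hq hqb (μ₂ / s)
  rw [hμ, hρ] at h1 h2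
  have hmoment₁ := hmoment 1
  simp only [pow_one] at hmoment₁
  rw [hmoment 2, hmoment₁, h1, h2]
  field_simp
  ring
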